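/- arXiv:quant-ph/0611095 — 4 statements merged into one kernel-verified Lean document; each statement's English description precedes it below -/
import Mathlib

section
/- Let r, s, f be reals with r, s > 0, 0 ≤ f, and let η₁, η₂ > 0 with η₁ + η₂ = 1. Suppose y, z ≥ 0 satisfy (r − y) ≥ 0, (s − z) ≥ 0 and (r − y)(s − z) ≥ f². If √(η₁/η₂) ≤ f/r, then η₁ y + η₂ z ≤ η₂ (s − f²/r). -/
theorem stmt_8 (r s f η₁ η₂ y z : ℝ)
    (hr : 0 < r) (hs : 0 < s) (hf : 0 ≤ f)
    (hη₁ : 0 < η₁) (hη₂ : 0 < η₂) (hsum : η₁ + η₂ = 1)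
    (hy : 0 ≤ y) (hz : 0 ≤ z)
    (hry : 0 ≤ r - y) (hsz : 0 ≤ s - z)
    (hdet : f ^ 2 ≤ (r - y) * (s - z))
    (hreg : Real.sqrt (η₁ / η₂) ≤ f / r) :
    η₁ * y + η₂ * z ≤ η₂ * (s - f ^ 2 / r) := by
  have hsq : η₁ / η₂ ≤ (f / r) ^ 2 := by
    have h0 : 0 ≤ η₁ / η₂ := le_of_lt (div_pos hη₁ hη₂)
    calc η₁ / η₂ = Real.sqrt (η₁ / η₂) ^ 2 := (Real.sq_sqrt h0).symm
      _ ≤ (f / r) ^ 2 := by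
          apply pow_le_pow_left₀ (Real.sqrt_nonneg _) hreg
  have hA : η₁ * r ^ 2 ≤ η₂ * f ^ 2 := by
    rw [div_pow, div_le_div_iff₀ hη₂ (by positivity)] at hsq
    nlinarith [hsq]
  have hB : η₁ * r ≤ η₂ * (s - z) := by
    have h1 : η₂ * f ^ 2 ≤ η₂ * ((r - y) * (s - z)) := by nlinarith
    have h2 : η₂ * ((r - y) * (s - z)) ≤ η₂ * (r * (s - z)) := by nlinarith [mul_nonneg hη₂.le (mul_nonneg hy hsz)]
    nlinarith
  have key : (η₁ * y + η₂ * z) * r ≤ η₂ * (s * r - f ^ 2) := by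
    nlinarith [mul_le_mul_of_nonneg_left hB hy, mul_le_mul_of_nonneg_left hdet hη₂.le]
  have hrw : η₂ * (s - f ^ 2 / r) = η₂ * (s * r - f ^ 2) / r := by
    field_simp
  rw [hrw, le_div_iff₀ hr]
  exact key
end

section
/- For any 0 < η₁ < 1 with η₂ = 1 − η₁, and reals r_m, s_m > 0, f_m ≥ 0 (m = 1,…,t) with f_m² ≤ r_m s_m, if y_m, z_m ≥ 0 satisfy (r_m − y_m)(s_m − z_m) ≥ f_m², r_m − y_m ≥ 0, s_m − z_m ≥ 0 for all m, and additionally f_m/r_m ≤ √(η₁/η₂) ≤ s_m/f_m for all m, then Σ_m (η₁ y_m + η₂ z_m) ≤ (η₁ Σ_m r_m + η₂ Σ_m s_m) − 2 √(η₁ η₂) Σ_m f_m. -/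
theorem stmt_11 (t : ℕ) (η₁ : ℝ) (hη₁ : 0 < η₁) (hη₁' : η₁ < 1)
    (η₂ : ℝ) (hη₂ : η₂ = 1 - η₁)
    (r s f y z : Fin t → ℝ)
    (hr : ∀ m, 0 < r m) (hs : ∀ m, 0 < s m) (hf : ∀ m, 0 ≤ f m)
    (hfrs : ∀ m, f m ^ 2 ≤ r m * s m)
    (hy : ∀ m, 0 ≤ y m) (hz : ∀ m, 0 ≤ z m)
    (hry : ∀ m, 0 ≤ r m - y m) (hsz : ∀ m, 0 ≤ s m - z m)
    (hdet : ∀ m, f m ^ 2 ≤ (r m - y m) * (s m - z m))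
    (hlow : ∀ m, f m / r m ≤ Real.sqrt (η₁ / η₂))
    (hhigh : ∀ m, Real.sqrt (η₁ / η₂) ≤ s m / f m) :
    ∑ m, (η₁ * y m + η₂ * z m) ≤
      (η₁ * ∑ m, r m + η₂ * ∑ m, s m) - 2 * Real.sqrt (η₁ * η₂) * ∑ m, f m := by
  have hη₂0 : 0 < η₂ := by rw [hη₂]; linarith
  have key : ∀ m, η₁ * y m + η₂ * z m ≤
      η₁ * r m + η₂ * s m - 2 * Real.sqrt (η₁ * η₂) * f m := by
    intro m
    set a := η₁ * (r m - y m) with ha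
    set b := η₂ * (s m - z m) with hb
    have ha0 : 0 ≤ a := mul_nonneg hη₁.le (hry m)
    have hb0 : 0 ≤ b := mul_nonneg hη₂0.le (hsz m)
    have h1 : 2 * Real.sqrt a * Real.sqrt b ≤ a + b := by
      nlinarith [sq_nonneg (Real.sqrt a - Real.sqrt b), Real.sq_sqrt ha0, Real.sq_sqrt hb0]
    have h2 : Real.sqrt (η₁ * η₂) * f m ≤ Real.sqrt a * Real.sqrt b := by
      rw [← Real.sqrt_mul ha0]
      have : Real.sqrt (η₁ * η₂) * f m = Real.sqrt (η₁ * η₂ * f m ^ 2) := by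
        rw [Real.sqrt_mul (mul_nonneg hη₁.le hη₂0.le), Real.sqrt_sq (hf m)]
      rw [this]
      apply Real.sqrt_le_sqrt
      have := hdet m
      calc η₁ * η₂ * f m ^ 2 ≤ η₁ * η₂ * ((r m - y m) * (s m - z m)) := by
            apply mul_le_mul_of_nonneg_left this (mul_nonneg hη₁.le hη₂0.le)
        _ = a * b := by ring
    nlinarith
  calc ∑ m, (η₁ * y m + η₂ * z m)
      ≤ ∑ m, (η₁ * r m + η₂ * s m - 2 * Real.sqrt (η₁ * η₂) * f m) :=
        Finset.sum_le_sum fun m _ => key m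
    _ = (η₁ * ∑ m, r m + η₂ * ∑ m, s m) - 2 * Real.sqrt (η₁ * η₂) * ∑ m, f m := by
        simp [Finset.sum_sub_distrib, Finset.sum_add_distrib, Finset.mul_sum]
end

section
/- Let η₁, η₂ > 0 with η₁ + η₂ = 1, and reals r_m, s_m > 0, f_m > 0 (m = 1,…,t) with f_m² ≤ r_m s_m and √(η₁/η₂) ≥ s_m/f_m for all m. If y_m, z_m ≥ 0 satisfy r_m − y_m ≥ 0, s_m − z_m ≥ 0, and (r_m − y_m)(s_m − z_m) ≥ f_m² for all m, then Σ_m (η₁ y_m + η₂ z_m) ≤ η₁ (Σ_m r_m − Σ_m f_m²/s_m). -/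
theorem stmt_12 (t : ℕ) (η₁ η₂ : ℝ) (hη₁ : 0 < η₁) (hη₂ : 0 < η₂) (hsum : η₁ + η₂ = 1)
    (r s f y z : Fin t → ℝ)
    (hr : ∀ m, 0 < r m) (hs : ∀ m, 0 < s m) (hf : ∀ m, 0 < f m)
    (hfrs : ∀ m, f m ^ 2 ≤ r m * s m)
    (hreg : ∀ m, s m / f m ≤ Real.sqrt (η₁ / η₂))
    (hy : ∀ m, 0 ≤ y m) (hz : ∀ m, 0 ≤ z m)
    (hry : ∀ m, 0 ≤ r m - y m) (hsz : ∀ m, 0 ≤ s m - z m)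
    (hdet : ∀ m, f m ^ 2 ≤ (r m - y m) * (s m - z m)) :
    ∑ m, (η₁ * y m + η₂ * z m) ≤ η₁ * (∑ m, r m - ∑ m, f m ^ 2 / s m) := by
  have key : ∀ m, η₁ * y m + η₂ * z m ≤ η₁ * (r m - f m ^ 2 / s m) := by
    intro m
    have hspos := hs m
    have hfpos := hf m
    have hszpos : 0 < s m - z m := by
      rcases lt_or_eq_of_le (hsz m) with h | h
      · exact h
      · exfalso
        have hd := hdet m
        rw [← h, mul_zero] at hd
        nlinarith [pow_pos hfpos 2]
    -- η₂ s² ≤ η₁ f²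
    have hsqrt : (s m / f m) ^ 2 ≤ η₁ / η₂ := by
      have h0 : 0 ≤ s m / f m := le_of_lt (div_pos hspos hfpos)
      have := hreg m
      nlinarith [Real.sq_sqrt (le_of_lt (div_pos hη₁ hη₂)), Real.sqrt_nonneg (η₁ / η₂)]
    have hkey : η₂ * (s m) ^ 2 ≤ η₁ * (f m) ^ 2 := by
      have h1 : (s m) ^ 2 / (f m) ^ 2 ≤ η₁ / η₂ := by
        rw [← div_pow]; exact hsqrt
      rw [div_le_div_iff₀ (by positivity) hη₂] at h1
      linarith
    have hdetm := hdet m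
    rw [← sub_nonneg]
    have expand : η₁ * (r m - f m ^ 2 / s m) - (η₁ * y m + η₂ * z m) =
        (η₁ * ((r m - y m) * (s m - z m) - f m ^ 2) * s m
          + η₁ * f m ^ 2 * z m - η₂ * z m * s m * (s m - z m)) / (s m * (s m - z m)) := by
      field_simp
      ring
    rw [expand]
    apply div_nonneg _ (by positivity)
    have h2 : η₂ * z m * s m * (s m - z m) ≤ η₁ * f m ^ 2 * z m := by
      have : s m * (s m - z m) ≤ (s m) ^ 2 := by nlinarith [hz m]
      nlinarith [hz m, mul_le_mul_of_nonneg_left this (le_of_lt hη₂)]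
    have h3 : 0 ≤ η₁ * ((r m - y m) * (s m - z m) - f m ^ 2) * s m := by
      apply mul_nonneg (mul_nonneg (le_of_lt hη₁) (by linarith)) (le_of_lt hspos)
    linarith
  calc ∑ m, (η₁ * y m + η₂ * z m) ≤ ∑ m, η₁ * (r m - f m ^ 2 / s m) :=
        Finset.sum_le_sum fun m _ => key m
    _ = η₁ * (∑ m, r m - ∑ m, f m ^ 2 / s m) := by
        rw [← Finset.sum_sub_distrib, Finset.mul_sum]
end

section
/- Let 0 < cos θ₁ ≤ cos θ₂ < 1 and set F = (cos θ₁ + cos θ₂)/2, Ra₁ = (cos²θ₁ + cos²θ₂)/(cos θ₁ + cos θ₂). For η₂ ∈ (0,1), η₁ = 1 − η₂, and x = √(η₁/η₂) with cos θ₁ ≤ x ≤ Ra₁, define f(x) = (η₂/2)·[2x cos θ₁ − cos²θ₁ − 2x² cos θ₁ cos θ₂/(cos²θ₁ + cos²θ₂)]. Then f(cos θ₁) ≥ 0 and f(Ra₁) ≥ 0, and f(x) ≥ 0 for all x ∈ [cos θ₁, Ra₁]. -/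
theorem stmt_14 (θ₁ θ₂ η₂ : ℝ)
    (h0 : 0 < Real.cos θ₁) (h12 : Real.cos θ₁ ≤ Real.cos θ₂) (h2 : Real.cos θ₂ < 1)
    (hη₂ : 0 < η₂) (hη₂' : η₂ < 1)
    (Ra₁ : ℝ)
    (hRa₁ : Ra₁ = (Real.cos θ₁ ^ 2 + Real.cos θ₂ ^ 2) / (Real.cos θ₁ + Real.cos θ₂))
    (f : ℝ → ℝ)
    (hf : ∀ x, f x = (η₂ / 2) * (2 * x * Real.cos θ₁ - Real.cos θ₁ ^ 2 -
      2 * x ^ 2 * Real.cos θ₁ * Real.cos θ₂ / (Real.cos θ₁ ^ 2 + Real.cos θ₂ ^ 2))) :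
    0 ≤ f (Real.cos θ₁) ∧ 0 ≤ f Ra₁ ∧
      ∀ x, Real.cos θ₁ ≤ x → x ≤ Ra₁ → 0 ≤ f x := by
  set a := Real.cos θ₁ with ha
  set b := Real.cos θ₂ with hb
  have hb0 : 0 < b := lt_of_lt_of_le h0 h12
  have hs : 0 < a ^ 2 + b ^ 2 := by positivity
  have hab : 0 < a + b := by linarith
  have key : ∀ x, a ≤ x → x ≤ Ra₁ → 0 ≤ f x := by
    intro x hx1 hx2
    rw [hf]
    have hxb : x * (a + b) ≤ a ^ 2 + b ^ 2 := by
      rw [hRa₁] at hx2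
      calc x * (a + b) ≤ ((a ^ 2 + b ^ 2) / (a + b)) * (a + b) :=
            mul_le_mul_of_nonneg_right hx2 hab.le
        _ = a ^ 2 + b ^ 2 := by field_simp
    have hxbb : x ≤ b := by nlinarith
    have h1 : 0 ≤ (x - a) * (a ^ 2 + b ^ 2 - x * (a + b)) := by
      apply mul_nonneg <;> linarith
    have h2 : 0 ≤ x * (b - x) * (b - a) := by
      apply mul_nonneg
      apply mul_nonneg <;> linarith
      linarith
    have hmain : 0 ≤ 2 * x * a - a ^ 2 - 2 * x ^ 2 * a * b / (a ^ 2 + b ^ 2) := by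
      have := div_nonneg (by nlinarith : (0:ℝ) ≤ (2 * x * a - a ^ 2) * (a ^ 2 + b ^ 2) - 2 * x ^ 2 * a * b) hs.le
      calc (0:ℝ) ≤ ((2 * x * a - a ^ 2) * (a ^ 2 + b ^ 2) - 2 * x ^ 2 * a * b) / (a ^ 2 + b ^ 2) := this
        _ = 2 * x * a - a ^ 2 - 2 * x ^ 2 * a * b / (a ^ 2 + b ^ 2) := by field_simp
    positivity
  have haRa : a ≤ Ra₁ := by
    rw [hRa₁, le_div_iff₀ hab]
    nlinarith
  exact ⟨key a le_rfl haRa, key Ra₁ haRa le_rfl, key⟩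
end
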